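/- arXiv:math/0212006 — 10 statements merged into one kernel-verified Lean document; each statement's English description precedes it below -/
import Mathlib

section
/- Let X₁ and X₂ be real-valued random variables on a probability space with finite second moments, and set Y := min(X₁,X₂) and Z := max(X₁,X₂). Then Cov(Y,Z) ≥ Cov(X₁,X₂). -/
/-!
Pointwise `min * max = X₁ * X₂`, so the two covariances differ only in the product of
the means. The means of `min` and `max` have the same sum as those of `X₁, X₂` but are
further apart: `E[max] - E[min] = E|X₁ - X₂| ≥ |E X₁ - E X₂|`. Among pairs of reals with
a fixed sum, the product decreases as the spread grows.
-/

open MeasureTheory ProbabilityTheory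

lemma mul_le_mul_of_add_eq_of_abs_sub_le_sub {a b y z : ℝ} (hsum : y + z = a + b)
    (hspread : |a - b| ≤ z - y) : y * z ≤ a * b := by
  have hsq : (a - b) ^ 2 ≤ (z - y) ^ 2 := by
    rw [← sq_abs (a - b)]
    exact pow_le_pow_left₀ (abs_nonneg _) hspread 2
  have hsq_sum : (y + z) ^ 2 = (a + b) ^ 2 := by rw [hsum]
  linarith

section MinMax

variable {α : Type*} {m : MeasurableSpace α} {μ : Measure α} {f g : α → ℝ}

lemma MeasureTheory.Integrable.min (hf : Integrable f μ) (hg : Integrable g μ) :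
    Integrable (fun x ↦ min (f x) (g x)) μ :=
  hf.inf hg

lemma MeasureTheory.Integrable.max (hf : Integrable f μ) (hg : Integrable g μ) :
    Integrable (fun x ↦ max (f x) (g x)) μ :=
  hf.sup hg

lemma integral_min_add_integral_max (hf : Integrable f μ) (hg : Integrable g μ) :
    ∫ x, min (f x) (g x) ∂μ + ∫ x, max (f x) (g x) ∂μ = ∫ x, f x ∂μ + ∫ x, g x ∂μ := by
  rw [← integral_add (hf.min hg) (hf.max hg), ← integral_add hf hg]
  simp only [min_add_max]

lemma abs_integral_sub_le_integral_max_sub_integral_min (hf : Integrable f μ)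
    (hg : Integrable g μ) :
    |∫ x, f x ∂μ - ∫ x, g x ∂μ| ≤ ∫ x, max (f x) (g x) ∂μ - ∫ x, min (f x) (g x) ∂μ := by
  rw [← integral_sub hf hg, ← integral_sub (hf.max hg) (hf.min hg)]
  simp only [max_sub_min_eq_abs']
  exact abs_integral_le_integral_abs

lemma integral_min_mul_integral_max_le (hf : Integrable f μ) (hg : Integrable g μ) :
    (∫ x, min (f x) (g x) ∂μ) * ∫ x, max (f x) (g x) ∂μ ≤ (∫ x, f x ∂μ) * ∫ x, g x ∂μ :=
  mul_le_mul_of_add_eq_of_abs_sub_le_sub (integral_min_add_integral_max hf hg)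
    (abs_integral_sub_le_integral_max_sub_integral_min hf hg)

end MinMax

/-- For real random variables `X₁, X₂` with finite second moments, with
`Y := min(X₁,X₂)` and `Z := max(X₁,X₂)`, one has `Cov(Y,Z) ≥ Cov(X₁,X₂)`,
where `Cov(U,V) = E[UV] - E[U]E[V]`. -/
theorem cov_min_max_ge_cov {Ω : Type*} [MeasureSpace Ω]
    [IsProbabilityMeasure (ℙ : Measure Ω)]
    (X₁ X₂ : Ω → ℝ) (hX₁ : MemLp X₁ 2) (hX₂ : MemLp X₂ 2)
    (Y Z : Ω → ℝ) (hY : Y = fun ω => min (X₁ ω) (X₂ ω))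
    (hZ : Z = fun ω => max (X₁ ω) (X₂ ω)) :
    (∫ ω, Y ω * Z ω) - (∫ ω, Y ω) * (∫ ω, Z ω) ≥
      (∫ ω, X₁ ω * X₂ ω) - (∫ ω, X₁ ω) * (∫ ω, X₂ ω) := by
  subst hY hZ
  have hmeans := integral_min_mul_integral_max_le (hX₁.integrable one_le_two)
    (hX₂.integrable one_le_two)
  simp only [min_mul_max]
  linarith
end

section
/- Let X₁ and X₂ be real-valued random variables on a probability space with finite second moments, and set Y := min(X₁,X₂) and Z := max(X₁,X₂). Then Cov(Y,Z) = Cov(X₁,X₂) if and only if X₁ ≥ X₂ almost surely or X₂ ≥ X₁ almost surely. -/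
open MeasureTheory ProbabilityTheory

/-! Since `min x y * max x y = x * y` and `min x y + max x y = x + y`, writing `m := E[Y]`,
`a := E[X₁]`, `b := E[X₂]` gives `E[Z] = a + b - m`, hence
`Cov(Y, Z) - Cov(X₁, X₂) = (a - m) * (b - m)`. Both factors are expectations of nonnegative
variables, `X₁ - Y` and `X₂ - Y`, so one of them vanishes iff `X₁ = Y` or `X₂ = Y` a.s. -/

namespace MeasureTheory

variable {α : Type*} [MeasurableSpace α] {μ : Measure α} {f g : α → ℝ}

lemma integral_min_eq_integral_left_iff (hf : Integrable f μ) (hg : Integrable g μ) :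
    ∫ x, min (f x) (g x) ∂μ = ∫ x, f x ∂μ ↔ f ≤ᵐ[μ] g := by
  have hmin : Integrable (fun x ↦ min (f x) (g x)) μ := hf.inf hg
  rw [integral_eq_iff_of_ae_le hmin hf (ae_of_all _ fun _ ↦ min_le_left _ _)]
  exact Filter.eventually_congr (ae_of_all _ fun _ ↦ min_eq_left_iff)

lemma integral_min_eq_integral_right_iff (hf : Integrable f μ) (hg : Integrable g μ) :
    ∫ x, min (f x) (g x) ∂μ = ∫ x, g x ∂μ ↔ g ≤ᵐ[μ] f := by
  simp_rw [min_comm (f _)]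
  exact integral_min_eq_integral_left_iff hg hf

lemma integral_max_eq (hf : Integrable f μ) (hg : Integrable g μ) :
    ∫ x, max (f x) (g x) ∂μ = ∫ x, f x ∂μ + ∫ x, g x ∂μ - ∫ x, min (f x) (g x) ∂μ := by
  have hmin : Integrable (fun x ↦ min (f x) (g x)) μ := hf.inf hg
  have hmax : Integrable (fun x ↦ max (f x) (g x)) μ := hf.sup hg
  rw [eq_sub_iff_add_eq, ← integral_add hmax hmin, ← integral_add hf hg]
  simp_rw [add_comm (max _ _), min_add_max]

lemma cov_min_max_sub_cov_eq_mul (hf : Integrable f μ) (hg : Integrable g μ) :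
    ((∫ x, min (f x) (g x) * max (f x) (g x) ∂μ) -
        (∫ x, min (f x) (g x) ∂μ) * ∫ x, max (f x) (g x) ∂μ) -
      ((∫ x, f x * g x ∂μ) - (∫ x, f x ∂μ) * ∫ x, g x ∂μ) =
    (∫ x, f x ∂μ - ∫ x, min (f x) (g x) ∂μ) * (∫ x, g x ∂μ - ∫ x, min (f x) (g x) ∂μ) := by
  simp_rw [min_mul_max, integral_max_eq hf hg]
  ring

end MeasureTheory

/-- For real random variables `X₁, X₂` with finite second moments, with
`Y := min(X₁,X₂)` and `Z := max(X₁,X₂)`, one has `Cov(Y,Z) = Cov(X₁,X₂)` iff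
`X₁ ≥ X₂` a.s. or `X₂ ≥ X₁` a.s. -/
theorem cov_min_max_eq_cov_iff {Ω : Type*} [MeasureSpace Ω]
    [IsProbabilityMeasure (ℙ : Measure Ω)]
    (X₁ X₂ : Ω → ℝ) (hX₁ : MemLp X₁ 2) (hX₂ : MemLp X₂ 2)
    (Y Z : Ω → ℝ) (hY : Y = fun ω => min (X₁ ω) (X₂ ω))
    (hZ : Z = fun ω => max (X₁ ω) (X₂ ω)) :
    (∫ ω, Y ω * Z ω) - (∫ ω, Y ω) * (∫ ω, Z ω) =
      (∫ ω, X₁ ω * X₂ ω) - (∫ ω, X₁ ω) * (∫ ω, X₂ ω) ↔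
    (∀ᵐ ω, X₂ ω ≤ X₁ ω) ∨ (∀ᵐ ω, X₁ ω ≤ X₂ ω) := by
  subst hY hZ
  have hi₁ : Integrable X₁ := hX₁.integrable one_le_two
  have hi₂ : Integrable X₂ := hX₂.integrable one_le_two
  rw [← sub_eq_zero, cov_min_max_sub_cov_eq_mul hi₁ hi₂, mul_eq_zero,
    sub_eq_zero, sub_eq_zero, eq_comm, integral_min_eq_integral_left_iff hi₁ hi₂, eq_comm,
    integral_min_eq_integral_right_iff hi₁ hi₂, or_comm]
  rfl
end

section
/- Let X₁ and X₂ be real-valued random variables on a probability space with finite second moments, and set Y := min(X₁,X₂) and Z := max(X₁,X₂). Then Var(Y) + Var(Z) ≤ Var(X₁) + Var(X₂). -/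
open MeasureTheory ProbabilityTheory

/-!
Pointwise, `(min, max)` is a rearrangement of `(X₁, X₂)`, so `Y + Z = X₁ + X₂` and
`Y² + Z² = X₁² + X₂²`; hence `Var Y + Var Z` and `Var X₁ + Var X₂` differ only through the
squared means. Those have the same sum `E Y + E Z = E X₁ + E X₂`, and `E Y` lies below both
`E X₁` and `E X₂`, so the pair `(E Y, E Z)` is more spread out and has the larger sum of squares.
-/

lemma sq_add_sq_le_sq_add_sq_of_add_eq {a b c d : ℝ} (hsum : a + b = c + d) (hac : a ≤ c)
    (had : a ≤ d) : c ^ 2 + d ^ 2 ≤ a ^ 2 + b ^ 2 := by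
  obtain rfl : b = c + d - a := by linarith
  -- the difference of the two sides is `2 (c - a) (d - a)`
  nlinarith [mul_nonneg (sub_nonneg.2 hac) (sub_nonneg.2 had)]

section MinMax

variable {Ω : Type*} [MeasurableSpace Ω] {μ : Measure Ω} {X₁ X₂ : Ω → ℝ}

lemma integral_min_add_integral_max_s5 (hX₁ : Integrable X₁ μ) (hX₂ : Integrable X₂ μ) :
    ∫ ω, min (X₁ ω) (X₂ ω) ∂μ + ∫ ω, max (X₁ ω) (X₂ ω) ∂μ = ∫ ω, X₁ ω ∂μ + ∫ ω, X₂ ω ∂μ := by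
  have hmin : Integrable (fun ω => min (X₁ ω) (X₂ ω)) μ := hX₁.inf hX₂
  have hmax : Integrable (fun ω => max (X₁ ω) (X₂ ω)) μ := hX₁.sup hX₂
  rw [← integral_add hmin hmax, ← integral_add hX₁ hX₂]
  simp only [min_add_max]

lemma integral_sq_min_add_integral_sq_max (hX₁ : MemLp X₁ 2 μ) (hX₂ : MemLp X₂ 2 μ) :
    ∫ ω, min (X₁ ω) (X₂ ω) ^ 2 ∂μ + ∫ ω, max (X₁ ω) (X₂ ω) ^ 2 ∂μ
      = ∫ ω, X₁ ω ^ 2 ∂μ + ∫ ω, X₂ ω ^ 2 ∂μ := by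
  have hmin : MemLp (fun ω => min (X₁ ω) (X₂ ω)) 2 μ := hX₁.inf hX₂
  have hmax : MemLp (fun ω => max (X₁ ω) (X₂ ω)) 2 μ := hX₁.sup hX₂
  rw [← integral_add hmin.integrable_sq hmax.integrable_sq,
    ← integral_add hX₁.integrable_sq hX₂.integrable_sq]
  simp only [fn_min_add_fn_max (· ^ 2)]

end MinMax

/-- For real random variables `X₁, X₂` with finite second moments, with
`Y := min(X₁,X₂)` and `Z := max(X₁,X₂)`,
`Var(Y) + Var(Z) ≤ Var(X₁) + Var(X₂)`. -/
theorem variance_min_add_variance_max_le {Ω : Type*} [MeasureSpace Ω]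
    [IsProbabilityMeasure (ℙ : Measure Ω)]
    (X₁ X₂ : Ω → ℝ) (hX₁ : MemLp X₁ 2) (hX₂ : MemLp X₂ 2)
    (Y Z : Ω → ℝ) (hY : Y = fun ω => min (X₁ ω) (X₂ ω))
    (hZ : Z = fun ω => max (X₁ ω) (X₂ ω)) :
    variance Y ℙ + variance Z ℙ ≤ variance X₁ ℙ + variance X₂ ℙ := by
  subst hY hZ
  have hmin : MemLp (fun ω => min (X₁ ω) (X₂ ω)) 2 := hX₁.inf hX₂
  have hmax : MemLp (fun ω => max (X₁ ω) (X₂ ω)) 2 := hX₁.sup hX₂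
  have hi₁ := hX₁.integrable one_le_two
  have hi₂ := hX₂.integrable one_le_two
  have hi_min := hmin.integrable one_le_two
  have hmeans : (∫ ω, X₁ ω) ^ 2 + (∫ ω, X₂ ω) ^ 2
      ≤ (∫ ω, min (X₁ ω) (X₂ ω)) ^ 2 + (∫ ω, max (X₁ ω) (X₂ ω)) ^ 2 :=
    sq_add_sq_le_sq_add_sq_of_add_eq (integral_min_add_integral_max_s5 hi₁ hi₂)
      (integral_mono hi_min hi₁ fun _ => min_le_left _ _)
      (integral_mono hi_min hi₂ fun _ => min_le_right _ _)
  rw [variance_eq_sub hmin, variance_eq_sub hmax, variance_eq_sub hX₁, variance_eq_sub hX₂]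
  simp only [Pi.pow_apply]
  linarith [integral_sq_min_add_integral_sq_max hX₁ hX₂]
end

section
/- Let X₁ and X₂ be real-valued random variables on a probability space with finite second moments, and set Y := min(X₁,X₂) and Z := max(X₁,X₂). Then Var(Y) + Var(Z) = Var(X₁) + Var(X₂) if and only if X₁ ≥ X₂ almost surely or X₂ ≥ X₁ almost surely. -/
open MeasureTheory ProbabilityTheory

/-! Since `min² + max² = X₁² + X₂²` pointwise, the second moments cancel and
`Var X₁ + Var X₂ - Var Y - Var Z = E[Y]² + E[Z]² - E[X₁]² - E[X₂]²`. As `E[Y] + E[Z] = E[X₁] + E[X₂]`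
and `E[Z] - E[Y] = E|X₁ - X₂|`, this equals `((E|D|)² - (E D)²) / 2` for `D = X₁ - X₂`, so equality
holds iff `|E D| = E|D|`, i.e. iff `D` has a.s. constant sign. -/

theorem min_sq_add_max_sq (a b : ℝ) : min a b ^ 2 + max a b ^ 2 = a ^ 2 + b ^ 2 := by
  rcases le_total a b with h | h <;> simp [h, add_comm]

section AbsIntegral

variable {α : Type*} [MeasurableSpace α] {μ : Measure α} {f : α → ℝ}

theorem integral_eq_integral_abs_iff (hf : Integrable f μ) :
    ∫ x, f x ∂μ = ∫ x, |f x| ∂μ ↔ 0 ≤ᵐ[μ] f := by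
  rw [integral_eq_iff_of_ae_le hf hf.abs (ae_of_all _ fun x => le_abs_self (f x))]
  simp only [Filter.EventuallyEq, Filter.EventuallyLE, Pi.zero_apply, eq_comm (a := f _),
    abs_eq_self]

theorem abs_integral_eq_integral_abs_iff (hf : Integrable f μ) :
    |∫ x, f x ∂μ| = ∫ x, |f x| ∂μ ↔ 0 ≤ᵐ[μ] f ∨ f ≤ᵐ[μ] 0 := by
  have hneg : ∫ x, f x ∂μ = -∫ x, |f x| ∂μ ↔ f ≤ᵐ[μ] 0 := by
    have h := integral_eq_integral_abs_iff hf.neg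
    simp only [Pi.neg_apply, integral_neg, abs_neg] at h
    rw [← neg_eq_iff_eq_neg, h]
    simp only [Filter.EventuallyLE, Pi.zero_apply, Pi.neg_apply, neg_nonneg]
  rw [abs_eq (integral_nonneg fun x => abs_nonneg (f x)), hneg, integral_eq_integral_abs_iff hf]

end AbsIntegral

theorem variance_min_add_variance_max {Ω : Type*} [MeasurableSpace Ω] {μ : Measure Ω}
    [IsProbabilityMeasure μ] {X₁ X₂ : Ω → ℝ} (hX₁ : MemLp X₁ 2 μ) (hX₂ : MemLp X₂ 2 μ) :
    variance (fun ω => min (X₁ ω) (X₂ ω)) μ + variance (fun ω => max (X₁ ω) (X₂ ω)) μ =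
      variance X₁ μ + variance X₂ μ -
        ((∫ ω, |X₁ ω - X₂ ω| ∂μ) ^ 2 - (∫ ω, X₁ ω - X₂ ω ∂μ) ^ 2) / 2 := by
  have hmin : MemLp (fun ω => min (X₁ ω) (X₂ ω)) 2 μ := hX₁.inf hX₂
  have hmax : MemLp (fun ω => max (X₁ ω) (X₂ ω)) 2 μ := hX₁.sup hX₂
  have hi₁ := hX₁.integrable one_le_two
  have hi₂ := hX₂.integrable one_le_two
  have hi_min := hmin.integrable one_le_two
  have hi_max := hmax.integrable one_le_two
  have hsq : ∫ ω, min (X₁ ω) (X₂ ω) ^ 2 ∂μ + ∫ ω, max (X₁ ω) (X₂ ω) ^ 2 ∂μ =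
      ∫ ω, X₁ ω ^ 2 ∂μ + ∫ ω, X₂ ω ^ 2 ∂μ := by
    rw [← integral_add hmin.integrable_sq hmax.integrable_sq,
      ← integral_add hX₁.integrable_sq hX₂.integrable_sq]
    simp only [min_sq_add_max_sq]
  have hsum : ∫ ω, min (X₁ ω) (X₂ ω) ∂μ + ∫ ω, max (X₁ ω) (X₂ ω) ∂μ =
      ∫ ω, X₁ ω ∂μ + ∫ ω, X₂ ω ∂μ := by
    rw [← integral_add hi_min hi_max, ← integral_add hi₁ hi₂]
    simp only [min_add_max]
  have hgap : ∫ ω, max (X₁ ω) (X₂ ω) ∂μ - ∫ ω, min (X₁ ω) (X₂ ω) ∂μ =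
      ∫ ω, |X₁ ω - X₂ ω| ∂μ := by
    rw [← integral_sub hi_max hi_min]
    simp only [max_sub_min_eq_abs']
  rw [variance_eq_sub hmin, variance_eq_sub hmax, variance_eq_sub hX₁, variance_eq_sub hX₂,
    ← hgap, integral_sub hi₁ hi₂]
  simp only [Pi.pow_apply]
  linear_combination hsq - (∫ ω, min (X₁ ω) (X₂ ω) ∂μ + ∫ ω, max (X₁ ω) (X₂ ω) ∂μ +
    ∫ ω, X₁ ω ∂μ + ∫ ω, X₂ ω ∂μ) / 2 * hsum

/-- For real random variables `X₁, X₂` with finite second moments, with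
`Y := min(X₁,X₂)` and `Z := max(X₁,X₂)`,
`Var(Y) + Var(Z) = Var(X₁) + Var(X₂)` iff `X₁ ≥ X₂` a.s. or `X₂ ≥ X₁` a.s. -/
theorem variance_min_add_variance_max_eq_iff {Ω : Type*} [MeasureSpace Ω]
    [IsProbabilityMeasure (ℙ : Measure Ω)]
    (X₁ X₂ : Ω → ℝ) (hX₁ : MemLp X₁ 2) (hX₂ : MemLp X₂ 2)
    (Y Z : Ω → ℝ) (hY : Y = fun ω => min (X₁ ω) (X₂ ω))
    (hZ : Z = fun ω => max (X₁ ω) (X₂ ω)) :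
    variance Y ℙ + variance Z ℙ = variance X₁ ℙ + variance X₂ ℙ ↔
      (∀ᵐ ω, X₂ ω ≤ X₁ ω) ∨ (∀ᵐ ω, X₁ ω ≤ X₂ ω) := by
  subst hY hZ
  have hD : Integrable (fun ω => X₁ ω - X₂ ω) :=
    (hX₁.integrable one_le_two).sub (hX₂.integrable one_le_two)
  rw [variance_min_add_variance_max hX₁ hX₂, sub_eq_self, div_eq_zero_iff, sub_eq_zero,
    or_iff_left two_ne_zero, sq_eq_sq_iff_abs_eq_abs,
    abs_of_nonneg (integral_nonneg fun ω => abs_nonneg _), eq_comm,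
    abs_integral_eq_integral_abs_iff hD]
  simp only [Filter.EventuallyLE, Pi.zero_apply, sub_nonneg, sub_nonpos]
end

section
/- Let X₁ and X₂ be real-valued random variables on a probability space with finite second moments, and set Y := min(X₁,X₂) and Z := max(X₁,X₂). If Var(Y) = Var(X₁) + Var(X₂), then Var(Z) = 0, so Z is almost surely constant. -/
open MeasureTheory ProbabilityTheory

/-! Pointwise `{min X₁ X₂, max X₁ X₂} = {X₁, X₂}`, so the first two moments of `min` and
`max` add up to those of `X₁` and `X₂`. Comparing the variances, the defect
`Var X₁ + Var X₂ - Var(min) - Var(max)` is `2 (E max - E X₁) (E max - E X₂) ≥ 0`, because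
`max` dominates both variables. -/

section MinMax

variable {Ω : Type*} [MeasurableSpace Ω] {μ : Measure Ω} {X₁ X₂ : Ω → ℝ}

lemma integral_comp_min_add_integral_comp_max (f : ℝ → ℝ)
    (h₁ : Integrable (fun ω ↦ f (X₁ ω)) μ) (h₂ : Integrable (fun ω ↦ f (X₂ ω)) μ)
    (hmin : Integrable (fun ω ↦ f ((X₁ ⊓ X₂) ω)) μ)
    (hmax : Integrable (fun ω ↦ f ((X₁ ⊔ X₂) ω)) μ) :
    ∫ ω, f ((X₁ ⊓ X₂) ω) ∂μ + ∫ ω, f ((X₁ ⊔ X₂) ω) ∂μ =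
      ∫ ω, f (X₁ ω) ∂μ + ∫ ω, f (X₂ ω) ∂μ := by
  rw [← integral_add hmin hmax, ← integral_add h₁ h₂]
  congr with ω
  exact fn_min_add_fn_max f (X₁ ω) (X₂ ω)

variable [IsProbabilityMeasure μ]

lemma variance_min_add_variance_max_s9 (h₁ : MemLp X₁ 2 μ) (h₂ : MemLp X₂ 2 μ) :
    Var[X₁ ⊓ X₂; μ] + Var[X₁ ⊔ X₂; μ] =
      Var[X₁; μ] + Var[X₂; μ] - 2 * (μ[X₁ ⊔ X₂] - μ[X₁]) * (μ[X₁ ⊔ X₂] - μ[X₂]) := by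
  have hmin := h₁.inf h₂
  have hmax := h₁.sup h₂
  have hmean := integral_comp_min_add_integral_comp_max (fun x ↦ x)
    (h₁.integrable one_le_two) (h₂.integrable one_le_two) (hmin.integrable one_le_two) (hmax.integrable one_le_two)
  have hsq := integral_comp_min_add_integral_comp_max (· ^ 2) h₁.integrable_sq h₂.integrable_sq
    hmin.integrable_sq hmax.integrable_sq
  rw [variance_eq_sub h₁, variance_eq_sub h₂, variance_eq_sub hmin, variance_eq_sub hmax]
  linear_combination hsq - (μ[X₁ ⊓ X₂] + μ[X₁] + μ[X₂] - μ[X₁ ⊔ X₂]) * hmean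

lemma variance_max_le (h₁ : MemLp X₁ 2 μ) (h₂ : MemLp X₂ 2 μ) :
    Var[X₁ ⊔ X₂; μ] ≤ Var[X₁; μ] + Var[X₂; μ] - Var[X₁ ⊓ X₂; μ] := by
  have hmax := (h₁.sup h₂).integrable one_le_two
  have hle₁ : μ[X₁] ≤ μ[X₁ ⊔ X₂] :=
    integral_mono (h₁.integrable one_le_two) hmax fun ω ↦ le_sup_left
  have hle₂ : μ[X₂] ≤ μ[X₁ ⊔ X₂] :=
    integral_mono (h₂.integrable one_le_two) hmax fun ω ↦ le_sup_right
  linarith [variance_min_add_variance_max_s9 h₁ h₂,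
    mul_nonneg (sub_nonneg.2 hle₁) (sub_nonneg.2 hle₂)]

end MinMax

/-- For real random variables `X₁, X₂` with finite second moments, with
`Y := min(X₁,X₂)` and `Z := max(X₁,X₂)`, if `Var(Y) = Var(X₁) + Var(X₂)`,
then `Var(Z) = 0` and `Z` is a.s. constant. -/
theorem variance_max_eq_zero_of_variance_min_eq_sum {Ω : Type*} [MeasureSpace Ω]
    [IsProbabilityMeasure (ℙ : Measure Ω)]
    (X₁ X₂ : Ω → ℝ) (hX₁ : MemLp X₁ 2) (hX₂ : MemLp X₂ 2)
    (Y Z : Ω → ℝ) (hY : Y = fun ω => min (X₁ ω) (X₂ ω))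
    (hZ : Z = fun ω => max (X₁ ω) (X₂ ω))
    (h : variance Y ℙ = variance X₁ ℙ + variance X₂ ℙ) :
    variance Z ℙ = 0 ∧ ∃ c : ℝ, ∀ᵐ ω, Z ω = c := by
  subst hY hZ
  change Var[X₁ ⊓ X₂] = _ at h
  have hvar : Var[X₁ ⊔ X₂] = 0 :=
    le_antisymm (by linarith [variance_max_le hX₁ hX₂]) (variance_nonneg _ _)
  exact ⟨hvar, _, ae_eq_integral_of_variance_eq_zero (hX₁.sup hX₂) hvar⟩
end

section
/- Let X₁ and X₂ be independent real-valued random variables on a probability space with finite second moments, and set Y := min(X₁,X₂) and Z := max(X₁,X₂). Then Cov(Y,Z) ≥ 0, i.e. Y and Z are positively correlated. -/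
/-!
Pointwise `min X₁ X₂ * max X₁ X₂ = X₁ * X₂` and `min X₁ X₂ + max X₁ X₂ = X₁ + X₂`. Writing
`m = E[min X₁ X₂]`, these give `Cov(min, max) = (E X₁ - m) (E X₂ - m) + Cov(X₁, X₂)`; both factors
of the product are nonnegative since `min ≤ Xᵢ`, and independence kills `Cov(X₁, X₂)`.
-/

open MeasureTheory ProbabilityTheory

section MinMax

variable {Ω : Type*} [MeasurableSpace Ω] {μ : Measure Ω} {X₁ X₂ : Ω → ℝ}

theorem integral_max_eq_add_sub_integral_min (h₁ : Integrable X₁ μ) (h₂ : Integrable X₂ μ) :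
    ∫ ω, max (X₁ ω) (X₂ ω) ∂μ = ∫ ω, X₁ ω ∂μ + ∫ ω, X₂ ω ∂μ - ∫ ω, min (X₁ ω) (X₂ ω) ∂μ := by
  have hmax : (fun ω => max (X₁ ω) (X₂ ω)) = fun ω => X₁ ω + X₂ ω - min (X₁ ω) (X₂ ω) := by
    funext ω
    rw [← min_add_max (X₁ ω) (X₂ ω)]
    ring
  have hsum : Integrable (fun ω => X₁ ω + X₂ ω) μ := h₁.add h₂
  have hmin : Integrable (fun ω => min (X₁ ω) (X₂ ω)) μ := h₁.inf h₂
  rw [hmax, integral_sub hsum hmin, integral_add h₁ h₂]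

theorem integral_min_mul_max_sub_eq (h₁ : Integrable X₁ μ) (h₂ : Integrable X₂ μ) :
    ∫ ω, min (X₁ ω) (X₂ ω) * max (X₁ ω) (X₂ ω) ∂μ
        - (∫ ω, min (X₁ ω) (X₂ ω) ∂μ) * ∫ ω, max (X₁ ω) (X₂ ω) ∂μ
      = (∫ ω, X₁ ω ∂μ - ∫ ω, min (X₁ ω) (X₂ ω) ∂μ) * (∫ ω, X₂ ω ∂μ - ∫ ω, min (X₁ ω) (X₂ ω) ∂μ)
        + (∫ ω, X₁ ω * X₂ ω ∂μ - (∫ ω, X₁ ω ∂μ) * ∫ ω, X₂ ω ∂μ) := by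
  simp only [min_mul_max, integral_max_eq_add_sub_integral_min h₁ h₂]
  ring

theorem integral_min_mul_max_sub_nonneg_of_indepFun (h₁ : Integrable X₁ μ)
    (h₂ : Integrable X₂ μ) (hind : IndepFun X₁ X₂ μ) :
    0 ≤ ∫ ω, min (X₁ ω) (X₂ ω) * max (X₁ ω) (X₂ ω) ∂μ
        - (∫ ω, min (X₁ ω) (X₂ ω) ∂μ) * ∫ ω, max (X₁ ω) (X₂ ω) ∂μ := by
  have hmin₁ : ∫ ω, min (X₁ ω) (X₂ ω) ∂μ ≤ ∫ ω, X₁ ω ∂μ :=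
    integral_mono (h₁.inf h₂) h₁ fun ω => min_le_left _ _
  have hmin₂ : ∫ ω, min (X₁ ω) (X₂ ω) ∂μ ≤ ∫ ω, X₂ ω ∂μ :=
    integral_mono (h₁.inf h₂) h₂ fun ω => min_le_right _ _
  rw [integral_min_mul_max_sub_eq h₁ h₂,
    hind.integral_fun_mul_eq_mul_integral h₁.aestronglyMeasurable h₂.aestronglyMeasurable,
    sub_self, add_zero]
  exact mul_nonneg (sub_nonneg.2 hmin₁) (sub_nonneg.2 hmin₂)

end MinMax

/-- For independent real random variables `X₁, X₂` with finite second moments,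
with `Y := min(X₁,X₂)` and `Z := max(X₁,X₂)`, one has `Cov(Y,Z) ≥ 0`. -/
theorem cov_min_max_nonneg_of_indep {Ω : Type*} [MeasureSpace Ω]
    [IsProbabilityMeasure (ℙ : Measure Ω)]
    (X₁ X₂ : Ω → ℝ) (hX₁ : MemLp X₁ 2) (hX₂ : MemLp X₂ 2)
    (hind : IndepFun X₁ X₂ ℙ)
    (Y Z : Ω → ℝ) (hY : Y = fun ω => min (X₁ ω) (X₂ ω))
    (hZ : Z = fun ω => max (X₁ ω) (X₂ ω)) :
    0 ≤ (∫ ω, Y ω * Z ω) - (∫ ω, Y ω) * (∫ ω, Z ω) := by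
  subst hY hZ
  exact integral_min_mul_max_sub_nonneg_of_indepFun (hX₁.integrable one_le_two)
    (hX₂.integrable one_le_two) hind
end

section
/- Let X, X₁ and X₂ be real-valued random variables on a probability space with finite second moments, and define the truncated random variable X(X₁,X₂) := min(X₂, max(X, X₁)). Then Var(X(X₁,X₂)) ≤ Var(X) + Var(X₁) + Var(X₂). -/
/-!
The variance is the least mean squared deviation from a constant, so it suffices to bound
`E[(X(X₁,X₂) - m)²]` with `m := min (E X₂) (max (E X) (E X₁))`. Truncation is 1-Lipschitz in
each argument for the sup norm, hence `|X(X₁,X₂) - m|` is at most the largest of the deviations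
`|X - E X|, |X₁ - E X₁|, |X₂ - E X₂|`, and its square at most the sum of their squares.
-/

open MeasureTheory ProbabilityTheory

lemma variance_le_integral_sub_sq {Ω : Type*} {mΩ : MeasurableSpace Ω} {μ : Measure Ω}
    [IsProbabilityMeasure μ] {X : Ω → ℝ} (hX : AEStronglyMeasurable X μ) (c : ℝ) :
    Var[X; μ] ≤ ∫ ω, (X ω - c) ^ 2 ∂μ := by
  rw [← variance_sub_const hX c]
  exact variance_le_expectation_sq (hX.sub aestronglyMeasurable_const)

lemma abs_min_max_sub_min_max_le (a b c a' b' c' : ℝ) :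
    |min c (max a b) - min c' (max a' b')| ≤ max |c - c'| (max |a - a'| |b - b'|) :=
  (abs_min_sub_min_le_max _ _ _ _).trans (max_le_max le_rfl (abs_max_sub_max_le_max _ _ _ _))

lemma sq_min_max_sub_min_max_le (a b c a' b' c' : ℝ) :
    (min c (max a b) - min c' (max a' b')) ^ 2 ≤ (a - a') ^ 2 + (b - b') ^ 2 + (c - c') ^ 2 := by
  rcases le_max_iff.mp (abs_min_max_sub_min_max_le a b c a' b' c') with hc | hab
  · nlinarith [sq_le_sq.mpr hc, sq_nonneg (a - a'), sq_nonneg (b - b')]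
  rcases le_max_iff.mp hab with ha | hb
  · nlinarith [sq_le_sq.mpr ha, sq_nonneg (b - b'), sq_nonneg (c - c')]
  · nlinarith [sq_le_sq.mpr hb, sq_nonneg (a - a'), sq_nonneg (c - c')]

/-- For real random variables `X, X₁, X₂` with finite second moments, the
truncated random variable `min(X₂, max(X, X₁))` satisfies
`Var(min(X₂, max(X, X₁))) ≤ Var(X) + Var(X₁) + Var(X₂)`. -/
theorem variance_truncation_le {Ω : Type*} [MeasureSpace Ω]
    [IsProbabilityMeasure (ℙ : Measure Ω)]
    (X X₁ X₂ : Ω → ℝ) (hX : MemLp X 2) (hX₁ : MemLp X₁ 2) (hX₂ : MemLp X₂ 2) :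
    variance (fun ω => min (X₂ ω) (max (X ω) (X₁ ω))) ℙ ≤
      variance X ℙ + variance X₁ ℙ + variance X₂ ℙ := by
  have hT : MemLp (fun ω => min (X₂ ω) (max (X ω) (X₁ ω))) 2 := hX₂.inf (hX.sup hX₁)
  have hsq {Y : Ω → ℝ} (hY : MemLp Y 2) (c : ℝ) : Integrable fun ω => (Y ω - c) ^ 2 :=
    (hY.sub (memLp_const c)).integrable_sq
  calc variance (fun ω => min (X₂ ω) (max (X ω) (X₁ ω))) ℙ
      ≤ ∫ ω, (min (X₂ ω) (max (X ω) (X₁ ω)) - min ℙ[X₂] (max ℙ[X] ℙ[X₁])) ^ 2 :=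
        variance_le_integral_sub_sq hT.1 _
    _ ≤ ∫ ω, ((X ω - ℙ[X]) ^ 2 + (X₁ ω - ℙ[X₁]) ^ 2 + (X₂ ω - ℙ[X₂]) ^ 2) :=
        integral_mono (hsq hT _) (((hsq hX _).fun_add (hsq hX₁ _)).fun_add (hsq hX₂ _))
          fun ω => sq_min_max_sub_min_max_le _ _ _ _ _ _
    _ = variance X ℙ + variance X₁ ℙ + variance X₂ ℙ := by
        rw [integral_add ((hsq hX _).fun_add (hsq hX₁ _)) (hsq hX₂ _),
          integral_add (hsq hX _) (hsq hX₁ _), variance_eq_integral hX.aemeasurable,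
          variance_eq_integral hX₁.aemeasurable, variance_eq_integral hX₂.aemeasurable]
end

section
/- Let X, X₁ and X₂ be real-valued random variables on a probability space with finite second moments, and define X(X₁,X₂) := min(X₂, max(X, X₁)). Then Var(X(X₁,X₂)) = Var(X) + Var(X₁) + Var(X₂) if and only if there exist real constants c₁ and c₂ such that one of the following four conditions holds almost surely: (1) X₂ = c₂, X₁ = c₁ and c₁ ≤ X ≤ c₂; (2) X = c₂, X₁ = c₁, c₂ ≥ c₁ and X₂ ≤ c₂; (3) X₂ = c₂, X = c₁ and c₁ ≤ X₁ ≤ c₂; (4) X₁ = c₂, X = c₁, c₂ ≥ c₁ and X₂ ≤ c₂. -/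
/-!
Let `T` be the truncation and `(X', X₁', X₂')` an independent copy of `(X, X₁, X₂)`; then
`Var U = E (U - U')² / 2` for each of `T, X, X₁, X₂`. The truncation is `1`-Lipschitz for the
sup-norm of `(X, X₁, X₂)`, so `(T - T')²` is at most the largest of the three squared increments,
hence at most their sum. Equality of variances therefore forces `(T - T')²` to equal that sum
almost surely, which is only possible when two of the three increments vanish. So two of
`X, X₁, X₂` are a.s. constant, and the truncation becomes a clamp (or a `min`) of the remaining
variable `Y` that preserves `|Y - Y'|`; this confines `Y` to the interval where the clamp is the
identity.
-/

open MeasureTheory ProbabilityTheory Filter Set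

section Real

lemma abs_min_max_sub_min_max_le_s13 (a a₁ a₂ b b₁ b₂ : ℝ) :
    |min a₂ (max a a₁) - min b₂ (max b b₁)| ≤ max |a - b| (max |a₁ - b₁| |a₂ - b₂|) :=
  calc |min a₂ (max a a₁) - min b₂ (max b b₁)|
      ≤ max |a₂ - b₂| |max a a₁ - max b b₁| := abs_min_sub_min_le_max _ _ _ _
    _ ≤ max |a₂ - b₂| (max |a - b| |a₁ - b₁|) :=
        max_le_max le_rfl (abs_max_sub_max_le_max _ _ _ _)
    _ = max |a - b| (max |a₁ - b₁| |a₂ - b₂|) := by rw [max_comm, max_assoc]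

lemma sq_le_sq_of_abs_le_max {t x y z : ℝ} (h : |t| ≤ max |x| (max |y| |z|)) :
    t ^ 2 ≤ x ^ 2 ∨ t ^ 2 ≤ y ^ 2 ∨ t ^ 2 ≤ z ^ 2 := by
  simpa only [le_max_iff, ← sq_le_sq] using h

lemma sq_le_add_of_abs_le_max {t x y z : ℝ} (h : |t| ≤ max |x| (max |y| |z|)) :
    t ^ 2 ≤ x ^ 2 + y ^ 2 + z ^ 2 := by
  rcases sq_le_sq_of_abs_le_max h with h | h | h <;>
    nlinarith [sq_nonneg x, sq_nonneg y, sq_nonneg z]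

lemma two_eq_zero_of_sq_eq_add_of_abs_le_max {t x y z : ℝ} (h : |t| ≤ max |x| (max |y| |z|))
    (he : t ^ 2 = x ^ 2 + y ^ 2 + z ^ 2) :
    (x = 0 ∧ y = 0) ∨ (x = 0 ∧ z = 0) ∨ (y = 0 ∧ z = 0) := by
  have := sq_nonneg x; have := sq_nonneg y; have := sq_nonneg z
  rcases sq_le_sq_of_abs_le_max h with h | h | h
  · exact Or.inr (Or.inr ⟨(sq_nonpos_iff y).1 (by linarith), (sq_nonpos_iff z).1 (by linarith)⟩)
  · exact Or.inr (Or.inl ⟨(sq_nonpos_iff x).1 (by linarith), (sq_nonpos_iff z).1 (by linarith)⟩)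
  · exact Or.inl ⟨(sq_nonpos_iff x).1 (by linarith), (sq_nonpos_iff y).1 (by linarith)⟩

lemma eq_or_mem_Icc_of_sq_sub_min_max_eq {c₁ c₂ x y : ℝ}
    (h : (min c₂ (max x c₁) - min c₂ (max y c₁)) ^ 2 = (x - y) ^ 2) :
    x = y ∨ (x ∈ Icc c₁ c₂ ∧ y ∈ Icc c₁ c₂) := by
  rcases sq_eq_sq_iff_eq_or_eq_neg.1 h with h | h <;> grind

lemma eq_or_mem_Iic_of_sq_sub_min_eq {m x y : ℝ} (h : (min x m - min y m) ^ 2 = (x - y) ^ 2) :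
    x = y ∨ (x ∈ Iic m ∧ y ∈ Iic m) := by
  rcases sq_eq_sq_iff_eq_or_eq_neg.1 h with h | h <;> grind

end Real

section Product

variable {Ω : Type*} [MeasurableSpace Ω] {μ : Measure Ω}

lemma ae_prod_fst_and_snd {P : Ω → Prop} (h : ∀ᵐ ω ∂μ, P ω) :
    ∀ᵐ p ∂μ.prod μ, P p.1 ∧ P p.2 :=
  (Measure.quasiMeasurePreserving_fst.ae h).and (Measure.quasiMeasurePreserving_snd.ae h)

lemma eventuallyConst_or_of_ae_prod [SFinite μ] {α β : Type*} {U : Ω → α} {V : Ω → β}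
    (h : ∀ᵐ p ∂μ.prod μ, U p.1 = U p.2 ∨ V p.1 = V p.2) :
    EventuallyConst U (ae μ) ∨ EventuallyConst V (ae μ) := by
  refine or_iff_not_imp_left.2 fun hU => ?_
  have : (ae μ).NeBot := neBot_iff.2 fun hbot => hU (hbot ▸ EventuallyConst.bot)
  have h' := Measure.ae_ae_of_ae_prod h
  obtain ⟨ω₀, hω₀⟩ := h'.exists
  have hU₀ : ∃ᶠ ω in ae μ, U ω ≠ U ω₀ :=
    not_eventually.1 fun hev => hU ((EventuallyConst.const _).congr (hev.mono fun _ => Eq.symm))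
  obtain ⟨ω₁, hne, hω₁, hVω₁⟩ := (hU₀.and_eventually (h'.and hω₀)).exists
  have hV₀₁ : V ω₀ = V ω₁ := hVω₁.resolve_left (Ne.symm hne)
  refine (EventuallyConst.const (V ω₀)).congr ?_
  filter_upwards [hω₀, hω₁] with ω h₀ h₁
  rcases h₀ with h₀ | h₀
  · exact hV₀₁.trans (h₁.resolve_left fun h₁ => hne (h₁.trans h₀.symm))
  · exact h₀

lemma eventuallyConst_or_ae_of_ae_prod [SFinite μ] {α : Type*} {U : Ω → α} {q : Ω → Prop}
    (h : ∀ᵐ p ∂μ.prod μ, U p.1 = U p.2 ∨ (q p.1 ∧ q p.2)) :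
    EventuallyConst U (ae μ) ∨ ∀ᵐ ω ∂μ, q ω := by
  refine or_iff_not_imp_right.2 fun hq => ?_
  obtain ⟨ω₀, hqω₀, hω₀⟩ :=
    ((not_eventually.1 hq).and_eventually (Measure.ae_ae_of_ae_prod h)).exists
  refine (EventuallyConst.const (U ω₀)).congr ?_
  filter_upwards [hω₀] with ω hω
  exact hω.resolve_right fun h' => hqω₀ h'.1

variable [IsProbabilityMeasure μ]

lemma integral_sq_sub_prod {U : Ω → ℝ} (hU : MemLp U 2 μ) :
    ∫ p, (U p.1 - U p.2) ^ 2 ∂μ.prod μ = 2 * Var[U; μ] := by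
  have hU₁ : Integrable U μ := hU.integrable one_le_two
  have hmean : ∫ p, (U p.1 + (-U) p.2) ∂μ.prod μ = 0 := by
    rw [integral_add (hU₁.comp_fst μ) (hU₁.neg.comp_snd μ), integral_fun_fst, integral_fun_snd]
    simp [integral_neg]
  have hW : AEMeasurable (fun p : Ω × Ω => U p.1 + (-U) p.2) (μ.prod μ) :=
    ((hU.comp_fst μ).add (hU.neg.comp_snd μ)).aemeasurable
  calc ∫ p, (U p.1 - U p.2) ^ 2 ∂μ.prod μ = Var[fun p => U p.1 + (-U) p.2; μ.prod μ] := by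
        rw [variance_of_integral_eq_zero hW hmean]; simp [sub_eq_add_neg]
    _ = 2 * Var[U; μ] := by rw [variance_add_prod hU hU.neg, variance_neg, two_mul]

lemma integrable_sq_sub_prod {U : Ω → ℝ} (hU : MemLp U 2 μ) :
    Integrable (fun p => (U p.1 - U p.2) ^ 2) (μ.prod μ) :=
  ((hU.comp_fst μ).sub (hU.comp_snd μ)).integrable_sq

lemma variance_eq_zero_of_ae_eq_const {U : Ω → ℝ} {c : ℝ} (h : ∀ᵐ ω ∂μ, U ω = c) :
    Var[U; μ] = 0 := by
  rw [variance_congr h, variance_eq_integral aemeasurable_const]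
  simp

end Product

section Truncation

variable {Ω : Type*}

def truncBetween (X X₁ X₂ : Ω → ℝ) (ω : Ω) : ℝ := min (X₂ ω) (max (X ω) (X₁ ω))

lemma truncBetween_comm (X X₁ X₂ : Ω → ℝ) : truncBetween X X₁ X₂ = truncBetween X₁ X X₂ := by
  ext ω
  simp only [truncBetween, max_comm]

variable [MeasurableSpace Ω] {μ : Measure Ω} {X X₁ X₂ : Ω → ℝ}

def IsDegenerateTruncation (μ : Measure Ω) (X X₁ X₂ : Ω → ℝ) : Prop :=
  ∃ c₁ c₂ : ℝ,
    (∀ᵐ ω ∂μ, X₂ ω = c₂ ∧ X₁ ω = c₁ ∧ c₁ ≤ X ω ∧ X ω ≤ c₂) ∨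
    (∀ᵐ ω ∂μ, X ω = c₂ ∧ X₁ ω = c₁ ∧ c₁ ≤ c₂ ∧ X₂ ω ≤ c₂) ∨
    (∀ᵐ ω ∂μ, X₂ ω = c₂ ∧ X ω = c₁ ∧ c₁ ≤ X₁ ω ∧ X₁ ω ≤ c₂) ∨
    (∀ᵐ ω ∂μ, X₁ ω = c₂ ∧ X ω = c₁ ∧ c₁ ≤ c₂ ∧ X₂ ω ≤ c₂)

lemma IsDegenerateTruncation.swap (h : IsDegenerateTruncation μ X X₁ X₂) :
    IsDegenerateTruncation μ X₁ X X₂ := by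
  obtain ⟨c₁, c₂, h | h | h | h⟩ := h
  exacts [⟨c₁, c₂, .inr (.inr (.inl h))⟩, ⟨c₁, c₂, .inr (.inr (.inr h))⟩, ⟨c₁, c₂, .inl h⟩,
    ⟨c₁, c₂, .inr (.inl h)⟩]

lemma isDegenerateTruncation_of_ae_eq_const {a a₁ a₂ : ℝ} (h : ∀ᵐ ω ∂μ, X ω = a)
    (h₁ : ∀ᵐ ω ∂μ, X₁ ω = a₁) (h₂ : ∀ᵐ ω ∂μ, X₂ ω = a₂) : IsDegenerateTruncation μ X X₁ X₂ := by
  wlog ha : a₁ ≤ a generalizing X X₁ a a₁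
  · exact (this h₁ h (le_of_not_ge ha)).swap
  rcases le_total a a₂ with ha₂ | ha₂
  · refine ⟨a₁, a₂, .inl ?_⟩
    filter_upwards [h, h₁, h₂] with ω e e₁ e₂
    exact ⟨e₂, e₁, e ▸ ha, e ▸ ha₂⟩
  · refine ⟨a₁, a, .inr (.inl ?_)⟩
    filter_upwards [h, h₁, h₂] with ω e e₁ e₂
    exact ⟨e, e₁, ha, e₂ ▸ ha₂⟩

/-- Equality, for almost every pair of independent samples, in the pointwise bound behind
`Var T ≤ Var X + Var X₁ + Var X₂`. -/
def SqIncrementAdditive (μ : Measure Ω) (X X₁ X₂ : Ω → ℝ) : Prop :=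
  ∀ᵐ p ∂μ.prod μ, (truncBetween X X₁ X₂ p.1 - truncBetween X X₁ X₂ p.2) ^ 2 =
    (X p.1 - X p.2) ^ 2 + (X₁ p.1 - X₁ p.2) ^ 2 + (X₂ p.1 - X₂ p.2) ^ 2

lemma SqIncrementAdditive.swap (h : SqIncrementAdditive μ X X₁ X₂) :
    SqIncrementAdditive μ X₁ X X₂ := by
  filter_upwards [h] with p hp
  rwa [truncBetween_comm, add_comm ((X p.1 - X p.2) ^ 2)] at hp

variable [SFinite μ]

lemma SqIncrementAdditive.isDegenerateTruncation_of_bounds (h : SqIncrementAdditive μ X X₁ X₂)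
    (hX₁ : EventuallyConst X₁ (ae μ)) (hX₂ : EventuallyConst X₂ (ae μ)) :
    IsDegenerateTruncation μ X X₁ X₂ := by
  obtain ⟨c₁, h₁⟩ := hX₁.eventuallyEq_const
  obtain ⟨c₂, h₂⟩ := hX₂.eventuallyEq_const
  have hX : ∀ᵐ p ∂μ.prod μ, X p.1 = X p.2 ∨ (X p.1 ∈ Icc c₁ c₂ ∧ X p.2 ∈ Icc c₁ c₂) := by
    filter_upwards [h, ae_prod_fst_and_snd h₁, ae_prod_fst_and_snd h₂]
      with p hp ⟨e₁, e₁'⟩ ⟨e₂, e₂'⟩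
    simp only [truncBetween, e₁, e₁', e₂, e₂', sub_self] at hp
    exact eq_or_mem_Icc_of_sq_sub_min_max_eq (by simpa using hp)
  rcases eventuallyConst_or_ae_of_ae_prod (U := X) (q := (X · ∈ Icc c₁ c₂)) hX with hc | hIcc
  · obtain ⟨c, hc⟩ := hc.eventuallyEq_const
    exact isDegenerateTruncation_of_ae_eq_const hc h₁ h₂
  · refine ⟨c₁, c₂, .inl ?_⟩
    filter_upwards [h₁, h₂, hIcc] with ω e₁ e₂ hω
    exact ⟨e₂, e₁, hω⟩

lemma SqIncrementAdditive.isDegenerateTruncation_of_max (h : SqIncrementAdditive μ X X₁ X₂)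
    (hX : EventuallyConst X (ae μ)) (hX₁ : EventuallyConst X₁ (ae μ)) :
    IsDegenerateTruncation μ X X₁ X₂ := by
  obtain ⟨c, h₀⟩ := hX.eventuallyEq_const
  obtain ⟨c₁, h₁⟩ := hX₁.eventuallyEq_const
  have hX₂ : ∀ᵐ p ∂μ.prod μ,
      X₂ p.1 = X₂ p.2 ∨ (X₂ p.1 ∈ Iic (max c c₁) ∧ X₂ p.2 ∈ Iic (max c c₁)) := by
    filter_upwards [h, ae_prod_fst_and_snd h₀, ae_prod_fst_and_snd h₁]
      with p hp ⟨e, e'⟩ ⟨e₁, e₁'⟩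
    simp only [truncBetween, e, e', e₁, e₁', sub_self] at hp
    exact eq_or_mem_Iic_of_sq_sub_min_eq (by simpa using hp)
  rcases eventuallyConst_or_ae_of_ae_prod (U := X₂) (q := (X₂ · ∈ Iic (max c c₁))) hX₂
    with hc | hIic
  · obtain ⟨c₂, h₂⟩ := hc.eventuallyEq_const
    exact isDegenerateTruncation_of_ae_eq_const h₀ h₁ h₂
  rcases le_total c₁ c with hc | hc
  · refine ⟨c₁, c, .inr (.inl ?_)⟩
    filter_upwards [h₀, h₁, hIic] with ω e e₁ hω
    exact ⟨e, e₁, hc, max_eq_left hc ▸ hω⟩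
  · refine ⟨c, c₁, .inr (.inr (.inr ?_))⟩
    filter_upwards [h₀, h₁, hIic] with ω e e₁ hω
    exact ⟨e₁, e, hc, max_eq_right hc ▸ hω⟩

lemma SqIncrementAdditive.isDegenerateTruncation (h : SqIncrementAdditive μ X X₁ X₂) :
    IsDegenerateTruncation μ X X₁ X₂ := by
  have htwo : ∀ᵐ p ∂μ.prod μ, (X p.1 = X p.2 ∧ X₁ p.1 = X₁ p.2) ∨
      (X p.1 = X p.2 ∧ X₂ p.1 = X₂ p.2) ∨ (X₁ p.1 = X₁ p.2 ∧ X₂ p.1 = X₂ p.2) := by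
    filter_upwards [h] with p hp
    simpa only [sub_eq_zero] using
      two_eq_zero_of_sq_eq_add_of_abs_le_max (abs_min_max_sub_min_max_le_s13 _ _ _ _ _ _) hp
  rcases eventuallyConst_or_of_ae_prod (U := X) (V := X₂) (htwo.mono fun _ => by tauto)
    with hX | hX₂
  · rcases eventuallyConst_or_of_ae_prod (U := X₁) (V := X₂) (htwo.mono fun _ => by tauto)
      with hX₁ | hX₂
    · exact h.isDegenerateTruncation_of_max hX hX₁
    · exact (h.swap.isDegenerateTruncation_of_bounds hX hX₂).swap
  · rcases eventuallyConst_or_of_ae_prod (U := X) (V := X₁) (htwo.mono fun _ => by tauto)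
      with hX | hX₁
    · exact (h.swap.isDegenerateTruncation_of_bounds hX hX₂).swap
    · exact h.isDegenerateTruncation_of_bounds hX₁ hX₂

end Truncation

section Variance

variable {Ω : Type*} [MeasurableSpace Ω] {μ : Measure Ω} [IsProbabilityMeasure μ]
  {X X₁ X₂ : Ω → ℝ}

lemma sqIncrementAdditive_of_variance_eq (hX : MemLp X 2 μ) (hX₁ : MemLp X₁ 2 μ)
    (hX₂ : MemLp X₂ 2 μ)
    (h : Var[truncBetween X X₁ X₂; μ] = Var[X; μ] + Var[X₁; μ] + Var[X₂; μ]) :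
    SqIncrementAdditive μ X X₁ X₂ := by
  have hT : MemLp (truncBetween X X₁ X₂) 2 μ := hX₂.inf (hX.sup hX₁)
  have i := integrable_sq_sub_prod hX
  have i₁ := integrable_sq_sub_prod hX₁
  have i₂ := integrable_sq_sub_prod hX₂
  have i₀₁ : Integrable (fun p => (X p.1 - X p.2) ^ 2 + (X₁ p.1 - X₁ p.2) ^ 2) (μ.prod μ) :=
    i.add i₁
  have hsum : Integrable (fun p => (X p.1 - X p.2) ^ 2 + (X₁ p.1 - X₁ p.2) ^ 2 +
      (X₂ p.1 - X₂ p.2) ^ 2) (μ.prod μ) := i₀₁.add i₂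
  refine (integral_eq_iff_of_ae_le (integrable_sq_sub_prod hT) hsum
    (ae_of_all _ fun p => sq_le_add_of_abs_le_max (abs_min_max_sub_min_max_le_s13 _ _ _ _ _ _))).1 ?_
  rw [integral_add i₀₁ i₂, integral_add i i₁, integral_sq_sub_prod hT,
    integral_sq_sub_prod hX, integral_sq_sub_prod hX₁, integral_sq_sub_prod hX₂, h]
  ring

lemma IsDegenerateTruncation.variance_truncBetween (h : IsDegenerateTruncation μ X X₁ X₂) :
    Var[truncBetween X X₁ X₂; μ] = Var[X; μ] + Var[X₁; μ] + Var[X₂; μ] := by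
  obtain ⟨c₁, c₂, h | h | h | h⟩ := h
  · have hT : truncBetween X X₁ X₂ =ᵐ[μ] X :=
      h.mono fun ω ⟨e₂, e₁, hl, hu⟩ => by simp [truncBetween, e₂, e₁, hl, hu]
    rw [variance_congr hT, variance_eq_zero_of_ae_eq_const (h.mono fun _ h => h.2.1),
      variance_eq_zero_of_ae_eq_const (h.mono fun _ h => h.1), add_zero, add_zero]
  · have hT : truncBetween X X₁ X₂ =ᵐ[μ] X₂ :=
      h.mono fun ω ⟨e, e₁, hc, hu⟩ => by simp [truncBetween, e, e₁, hc, hu]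
    rw [variance_congr hT, variance_eq_zero_of_ae_eq_const (h.mono fun _ h => h.1),
      variance_eq_zero_of_ae_eq_const (h.mono fun _ h => h.2.1), zero_add, zero_add]
  · have hT : truncBetween X X₁ X₂ =ᵐ[μ] X₁ :=
      h.mono fun ω ⟨e₂, e, hl, hu⟩ => by simp [truncBetween, e₂, e, hl, hu]
    rw [variance_congr hT, variance_eq_zero_of_ae_eq_const (h.mono fun _ h => h.2.1),
      variance_eq_zero_of_ae_eq_const (h.mono fun _ h => h.1), zero_add, add_zero]
  · have hT : truncBetween X X₁ X₂ =ᵐ[μ] X₂ :=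
      h.mono fun ω ⟨e₁, e, hc, hu⟩ => by simp [truncBetween, e₁, e, hc, hu]
    rw [variance_congr hT, variance_eq_zero_of_ae_eq_const (h.mono fun _ h => h.2.1),
      variance_eq_zero_of_ae_eq_const (h.mono fun _ h => h.1), zero_add, zero_add]

end Variance

/-- For real random variables `X, X₁, X₂` with finite second moments,
`Var(min(X₂, max(X, X₁))) = Var(X) + Var(X₁) + Var(X₂)` iff there exist
constants `c₁, c₂` such that one of the four conditions of
Theorem `var-eqt2` holds almost surely. -/
theorem variance_truncation_eq_iff {Ω : Type*} [MeasureSpace Ω]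
    [IsProbabilityMeasure (ℙ : Measure Ω)]
    (X X₁ X₂ : Ω → ℝ) (hX : MemLp X 2) (hX₁ : MemLp X₁ 2) (hX₂ : MemLp X₂ 2) :
    variance (fun ω => min (X₂ ω) (max (X ω) (X₁ ω))) ℙ =
      variance X ℙ + variance X₁ ℙ + variance X₂ ℙ ↔
    ∃ c₁ c₂ : ℝ,
      (∀ᵐ ω, X₂ ω = c₂ ∧ X₁ ω = c₁ ∧ c₁ ≤ X ω ∧ X ω ≤ c₂) ∨
      (∀ᵐ ω, X ω = c₂ ∧ X₁ ω = c₁ ∧ c₁ ≤ c₂ ∧ X₂ ω ≤ c₂) ∨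
      (∀ᵐ ω, X₂ ω = c₂ ∧ X ω = c₁ ∧ c₁ ≤ X₁ ω ∧ X₁ ω ≤ c₂) ∨
      (∀ᵐ ω, X₁ ω = c₂ ∧ X ω = c₁ ∧ c₁ ≤ c₂ ∧ X₂ ω ≤ c₂) :=
  ⟨fun h => (sqIncrementAdditive_of_variance_eq hX hX₁ hX₂ h).isDegenerateTruncation,
    IsDegenerateTruncation.variance_truncBetween⟩
end

section
/- Let X be a real-valued random variable on a probability space with finite second moment, and for a real number s set Y(s) := min(X, s). Then for all real s₁ ≤ s₂, Var(Y(s₁)) ≤ Var(Y(s₂)); that is, s ↦ Var(min(X, s)) is non-decreasing. -/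
open MeasureTheory ProbabilityTheory
open scoped NNReal

/-! Truncation `x ↦ min x s` is `1`-Lipschitz, and a `K`-Lipschitz image of a random variable has
variance at most `K²` times the original one: compare `Var[f ∘ X]` with the second moment of
`f ∘ X` about the (suboptimal) centre `f (E[X])`. Since `min (min X s₂) s₁ = min X s₁` for
`s₁ ≤ s₂`, this applied to `min X s₂` gives the monotonicity. -/

namespace ProbabilityTheory

variable {Ω : Type*} {mΩ : MeasurableSpace Ω} {μ : Measure Ω} [IsProbabilityMeasure μ]

lemma variance_le_integral_sub_sq {U : Ω → ℝ} (hU : AEStronglyMeasurable U μ) (c : ℝ) :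
    Var[U; μ] ≤ ∫ ω, (U ω - c) ^ 2 ∂μ := by
  rw [← variance_sub_const hU c]
  exact variance_le_expectation_sq (hU.sub aestronglyMeasurable_const)

lemma _root_.LipschitzWith.variance_comp_le {f : ℝ → ℝ} {K : ℝ≥0} (hf : LipschitzWith K f)
    {X : Ω → ℝ} (hX : MemLp X 2 μ) :
    Var[fun ω ↦ f (X ω); μ] ≤ K ^ 2 * Var[X; μ] := by
  have hfX : AEStronglyMeasurable (fun ω ↦ f (X ω)) μ :=
    hf.continuous.comp_aestronglyMeasurable hX.aestronglyMeasurable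
  have h_sq_le (a b : ℝ) : (f a - f b) ^ 2 ≤ K ^ 2 * (a - b) ^ 2 := by
    rw [← sq_abs, ← sq_abs (a - b), ← mul_pow]
    exact pow_le_pow_left₀ (abs_nonneg _) (hf.dist_le_mul a b) 2
  calc Var[fun ω ↦ f (X ω); μ] ≤ ∫ ω, (f (X ω) - f μ[X]) ^ 2 ∂μ :=
        variance_le_integral_sub_sq hfX _
    _ ≤ ∫ ω, K ^ 2 * (X ω - μ[X]) ^ 2 ∂μ :=
        integral_mono_of_nonneg (Filter.Eventually.of_forall fun _ ↦ sq_nonneg _)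
          ((hX.sub (memLp_const μ[X])).integrable_sq.const_mul _)
          (Filter.Eventually.of_forall fun ω ↦ h_sq_le _ _)
    _ = K ^ 2 * Var[X; μ] := by
        rw [integral_const_mul, variance_eq_integral hX.aemeasurable]

lemma variance_min_const_le {X : Ω → ℝ} (hX : MemLp X 2 μ) (s : ℝ) :
    Var[fun ω ↦ min (X ω) s; μ] ≤ Var[X; μ] := by
  simpa using (LipschitzWith.id.min_const s).variance_comp_le hX

end ProbabilityTheory

/-- For a real random variable `X` with finite second moment,
`s ↦ Var(min(X, s))` is non-decreasing. -/
theorem variance_min_const_monotone {Ω : Type*} [MeasureSpace Ω]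
    [IsProbabilityMeasure (ℙ : Measure Ω)]
    (X : Ω → ℝ) (hX : MemLp X 2) (s₁ s₂ : ℝ) (hs : s₁ ≤ s₂) :
    variance (fun ω => min (X ω) s₁) ℙ ≤ variance (fun ω => min (X ω) s₂) ℙ := by
  have h_min_min : (fun ω ↦ min (min (X ω) s₂) s₁) = fun ω ↦ min (X ω) s₁ := by
    funext ω
    rw [min_assoc, min_eq_right hs]
  rw [← h_min_min]
  exact variance_min_const_le (hX.inf (memLp_const s₂)) s₁
end

section
/- Let X be a real-valued random variable on a probability space with finite second moment, and for a real number s set Z(s) := max(X, s). Then for all real s₁ ≤ s₂, Var(Z(s₂)) ≤ Var(Z(s₁)); that is, s ↦ Var(max(X, s)) is non-increasing. -/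
/-!
Since `max (X, s₂) = max (max (X, s₁), s₂)` for `s₁ ≤ s₂`, the first variable is the image of
the second under the 1-Lipschitz map `x ↦ max x s₂`. A `K`-Lipschitz map `f` multiplies variance
by at most `K ^ 2`: the variance of `f ∘ Y` is its least mean square deviation from a constant,
so it is at most `E[(f Y - f E[Y])²] ≤ K² E[(Y - E[Y])²]`.
-/

open MeasureTheory ProbabilityTheory

open scoped NNReal

section

variable {Ω : Type*} [MeasurableSpace Ω] {μ : Measure Ω} [IsProbabilityMeasure μ] {X : Ω → ℝ}

lemma variance_le_integral_sub_const_sq (hX : AEStronglyMeasurable X μ) (c : ℝ) :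
    Var[X; μ] ≤ ∫ ω, (X ω - c) ^ 2 ∂μ := by
  rw [← variance_sub_const hX c]
  exact variance_le_expectation_sq (hX.sub aestronglyMeasurable_const)

lemma LipschitzWith.variance_comp_le_s15 {f : ℝ → ℝ} {K : ℝ≥0} (hf : LipschitzWith K f)
    (hX : MemLp X 2 μ) : Var[fun ω ↦ f (X ω); μ] ≤ K ^ 2 * Var[X; μ] := by
  have hpointwise : ∀ ω, (f (X ω) - f μ[X]) ^ 2 ≤ K ^ 2 * (X ω - μ[X]) ^ 2 := fun ω ↦ by
    have hlip := hf.dist_le_mul (X ω) μ[X]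
    rw [Real.dist_eq, Real.dist_eq] at hlip
    calc (f (X ω) - f μ[X]) ^ 2 = |f (X ω) - f μ[X]| ^ 2 := (sq_abs _).symm
      _ ≤ (K * |X ω - μ[X]|) ^ 2 := by gcongr
      _ = K ^ 2 * (X ω - μ[X]) ^ 2 := by rw [mul_pow, sq_abs]
  calc Var[fun ω ↦ f (X ω); μ]
      ≤ ∫ ω, (f (X ω) - f μ[X]) ^ 2 ∂μ :=
        variance_le_integral_sub_const_sq (hf.continuous.comp_aestronglyMeasurable hX.1) _
    _ ≤ ∫ ω, K ^ 2 * (X ω - μ[X]) ^ 2 ∂μ :=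
        integral_mono_of_nonneg (.of_forall fun _ ↦ sq_nonneg _)
          (((hX.sub (memLp_const _)).integrable_sq).const_mul _) (.of_forall hpointwise)
    _ = K ^ 2 * Var[X; μ] := by
        rw [integral_const_mul, variance_eq_integral hX.aemeasurable]

end

/-- For a real random variable `X` with finite second moment,
`s ↦ Var(max(X, s))` is non-increasing. -/
theorem variance_max_const_antitone {Ω : Type*} [MeasureSpace Ω]
    [IsProbabilityMeasure (ℙ : Measure Ω)]
    (X : Ω → ℝ) (hX : MemLp X 2) (s₁ s₂ : ℝ) (hs : s₁ ≤ s₂) :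
    variance (fun ω => max (X ω) s₂) ℙ ≤ variance (fun ω => max (X ω) s₁) ℙ := by
  have hmax : (fun ω ↦ max (X ω) s₂) = fun ω ↦ max (max (X ω) s₁) s₂ := by
    simp only [max_assoc, max_eq_right hs]
  rw [hmax]
  have hY : MemLp (fun ω ↦ max (X ω) s₁) 2 := hX.sup (memLp_const s₁)
  simpa using (LipschitzWith.id.max_const s₂).variance_comp_le_s15 hY
end
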